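/- Let f : ℝ≥0 → ℝ be continuous with f(0) ∈ [0,h], let Λ_{0,h}(f) denote its two-sided Skorohod reflection on [0,h], and let T ≥ 0. Then for all t < T, Λ_{0,h}(f)(t) = Λ_{0,h}(f(· ∧ T))(t), and for all t ≥ T, Λ_{0,h}(f)(t) = Λ_{0,h}(R^T(f) + Λ_{0,h}(f)(T))(t), where R^T(f)(t) := 1_{t ≥ T}·(f(t) − f(T)). -/

import Mathlib

/-!
The reflected path is unique.  If two solutions differ at `t`, look at the last time `s ≤ t`
at which the difference of their compensators was `≤ 0`.  On `(s, t]` the upper path stays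
off `0` and the lower path stays off `h`, so the only compensators that can move are the ones
that push the difference down, and continuity at `s` then gives a contradiction.

Both stages follow from one observation.  Composing a solution with a continuous monotone
time change `φ` (here `t ↦ t ∧ T` and `t ↦ t ∨ T`) gives a solution of the time-changed problem
started from the reflected level at `φ 0`, because `φ` maps `[a, b]` onto `[φ a, φ b]`.
Uniqueness then identifies the two reflections.
-/

open Set
open scoped NNReal ENNReal

/-- Solution data for the two-sided Skorohod reflection problem of `f` on `[0,h]`:
`c0` and `ch` are the compensators at `0` and at `h`,
and `fun t => f t + ch t + c0 t` is the reflected path `Λ_{0,h}(f)`.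
The support conditions on the measures `dc⁰` and `d(−cʰ)` are phrased as:
the compensator is constant on every (closed) interval on which the reflected
path avoids the corresponding boundary. -/
structure SkorohodPair (h : ℝ) (f c0 ch : ℝ≥0 → ℝ) : Prop where
  cont0 : Continuous c0
  conth : Continuous ch
  init0 : c0 0 = 0
  inith : ch 0 = 0
  mem_Icc : ∀ t, f t + ch t + c0 t ∈ Set.Icc (0 : ℝ) h
  mono0 : Monotone c0
  antih : Antitone ch
  flat0 : ∀ a b : ℝ≥0, a ≤ b → (∀ t ∈ Set.Icc a b, f t + ch t + c0 t ≠ 0) → c0 b = c0 a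
  flath : ∀ a b : ℝ≥0, a ≤ b → (∀ t ∈ Set.Icc a b, f t + ch t + c0 t ≠ h) → ch b = ch a

namespace SkorohodPair

variable {h : ℝ} {f c0 ch c0' ch' : ℝ≥0 → ℝ}

lemma compensator_sub_le_of_lt (hp : SkorohodPair h f c0 ch) (hq : SkorohodPair h f c0' ch')
    {a b : ℝ≥0} (hab : a ≤ b)
    (hlt : ∀ t ∈ Icc a b, f t + ch' t + c0' t < f t + ch t + c0 t) :
    (ch b + c0 b) - (ch' b + c0' b) ≤ (ch a + c0 a) - (ch' a + c0' a) := by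
  have hc0 : c0 b = c0 a := hp.flat0 a b hab fun t ht =>
    ((hq.mem_Icc t).1.trans_lt (hlt t ht)).ne'
  have hch' : ch' b = ch' a := hq.flath a b hab fun t ht =>
    ((hlt t ht).trans_le (hp.mem_Icc t).2).ne
  have hch : ch b ≤ ch a := hp.antih hab
  have hc0' : c0' a ≤ c0' b := hq.mono0 hab
  linarith

lemma reflected_le (hp : SkorohodPair h f c0 ch) (hq : SkorohodPair h f c0' ch') (t : ℝ≥0) :
    f t + ch t + c0 t ≤ f t + ch' t + c0' t := by
  set D : ℝ≥0 → ℝ := fun u => (ch u + c0 u) - (ch' u + c0' u) with hD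
  have hDc : Continuous D := (hp.conth.add hp.cont0).sub (hq.conth.add hq.cont0)
  by_contra! hDt
  replace hDt : 0 < D t := by simp only [hD]; linarith
  set S : Set ℝ≥0 := Iic t ∩ D ⁻¹' Iic 0
  have hS0 : (0 : ℝ≥0) ∈ S :=
    ⟨mem_Iic.2 zero_le, by simp [hD, hp.init0, hp.inith, hq.init0, hq.inith]⟩
  have hSbdd : BddAbove S := ⟨t, fun u hu => hu.1⟩
  set s := sSup S
  have hsS : s ∈ S := (isClosed_Iic.inter (isClosed_Iic.preimage hDc)).csSup_mem ⟨0, hS0⟩ hSbdd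
  have hst : s < t := lt_of_le_of_ne hsS.1 fun hst => (hsS.2.trans_lt (hst ▸ hDt)).false
  have hpos : ∀ u ∈ Ioc s t, 0 < D u := fun u hu =>
    lt_of_not_ge fun hDu => (le_csSup hSbdd ⟨hu.2, hDu⟩).not_gt hu.1
  have hDle : ∀ u ∈ Ioc s t, D t ≤ D u := fun u hu =>
    compensator_sub_le_of_lt hp hq hu.2 fun v hv => by
      have := hpos v ⟨hu.1.trans_le hv.1, hv.2⟩
      simp only [hD] at this
      linarith
  have hDts : D t ≤ D s :=
    ge_of_tendsto (hDc.tendsto s |>.mono_left nhdsWithin_le_nhds)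
      (Filter.mem_of_superset (Ioc_mem_nhdsGT hst) hDle)
  exact (hDts.trans hsS.2).not_gt hDt

theorem reflected_unique (hp : SkorohodPair h f c0 ch) (hq : SkorohodPair h f c0' ch')
    (t : ℝ≥0) : f t + ch t + c0 t = f t + ch' t + c0' t :=
  (hp.reflected_le hq t).antisymm (hq.reflected_le hp t)

theorem timeChange (hp : SkorohodPair h f c0 ch) {φ : ℝ≥0 → ℝ≥0} (hφc : Continuous φ)
    (hφm : Monotone φ) :
    SkorohodPair h (fun t => f (φ t) + (ch (φ 0) + c0 (φ 0)))
      (fun t => c0 (φ t) - c0 (φ 0)) (fun t => ch (φ t) - ch (φ 0)) := by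
  have hL : ∀ t, f (φ t) + (ch (φ 0) + c0 (φ 0)) + (ch (φ t) - ch (φ 0)) +
      (c0 (φ t) - c0 (φ 0)) = f (φ t) + ch (φ t) + c0 (φ t) := fun t => by ring
  have honto : ∀ {a b : ℝ≥0}, a ≤ b → ∀ u ∈ Icc (φ a) (φ b), ∃ s ∈ Icc a b, φ s = u :=
    fun hab u hu => intermediate_value_Icc hab hφc.continuousOn hu
  refine
    { cont0 := (hp.cont0.comp hφc).sub continuous_const
      conth := (hp.conth.comp hφc).sub continuous_const
      init0 := sub_self _
      inith := sub_self _
      mem_Icc := fun t => hL t ▸ hp.mem_Icc (φ t)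
      mono0 := fun a b hab => sub_le_sub_right (hp.mono0 (hφm hab)) _
      antih := fun a b hab => sub_le_sub_right (hp.antih (hφm hab)) _
      flat0 := fun a b hab hne => ?_
      flath := fun a b hab hne => ?_ }
  · rw [hp.flat0 _ _ (hφm hab) fun u hu => ?_]
    obtain ⟨s, hs, rfl⟩ := honto hab u hu
    exact hL s ▸ hne s hs
  · rw [hp.flath _ _ (hφm hab) fun u hu => ?_]
    obtain ⟨s, hs, rfl⟩ := honto hab u hu
    exact hL s ▸ hne s hs

theorem reflected_timeChange (hp : SkorohodPair h f c0 ch) {φ : ℝ≥0 → ℝ≥0}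
    (hφc : Continuous φ) (hφm : Monotone φ) {g e0 eh : ℝ≥0 → ℝ} (hq : SkorohodPair h g e0 eh)
    (hg : ∀ t, g t = f (φ t) + (ch (φ 0) + c0 (φ 0))) (t : ℝ≥0) :
    g t + eh t + e0 t = f (φ t) + ch (φ t) + c0 (φ t) := by
  obtain rfl : g = _ := funext hg
  rw [hq.reflected_unique (hp.timeChange hφc hφm) t]
  ring

end SkorohodPair

theorem skorohod_two_stage
    (h : ℝ) (f : ℝ≥0 → ℝ) (T : ℝ≥0)
    (c0 ch d0 dh e0 eh : ℝ≥0 → ℝ)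
    (hp : SkorohodPair h f c0 ch)
    (hq : SkorohodPair h (fun t => f (min t T)) d0 dh)
    (hr : SkorohodPair h
      (fun t => (if T ≤ t then f t - f T else 0) + (f T + ch T + c0 T)) e0 eh) :
    (∀ t, t < T → f t + ch t + c0 t = f (min t T) + dh t + d0 t) ∧
    (∀ t, T ≤ t → f t + ch t + c0 t =
      ((if T ≤ t then f t - f T else 0) + (f T + ch T + c0 T)) + eh t + e0 t) := by
  have hstop := hp.reflected_timeChange (φ := fun t => min t T)
    (continuous_id.min continuous_const) (monotone_id.min monotone_const) hq
    fun t => by simp [hp.init0, hp.inith]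
  have hrestart := hp.reflected_timeChange (φ := fun t => max t T)
    (continuous_id.max continuous_const) (monotone_id.max monotone_const) hr fun t => by
      rw [max_eq_right zero_le]
      split_ifs with hTt
      · rw [max_eq_left hTt]; ring
      · rw [max_eq_right (le_of_not_ge hTt)]; ring
  refine ⟨fun t ht => ?_, fun t ht => ?_⟩
  · rw [hstop, min_eq_left ht.le]
  · rw [hrestart, max_eq_left ht]
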